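/- arXiv:1609.08593 — 3 statements merged into one kernel-verified Lean document; each statement's English description precedes it below -/
import Mathlib

section
/- Let K be an algebraically closed field and let V be a 3-graded vector space over K such that the homogeneous components V_{(2,1,1)}, V_{(1,2,1)}, V_{(1,1,2)}, V_{(2,2,1)}, V_{(2,1,2)} and V_{(1,2,2)} are all nonzero. Then the quotient of the set of 3-graded nilpotent tuples on V by base-change equivalence is an infinite set. -/
/-! The six components form a hexagon
`(2,2,1) → (1,2,1) ← (1,2,2) → (1,1,2) ← (2,1,2) → (2,1,1) ← (2,2,1)` whose edges lower one
coordinate. Fixing a nonzero vector in each component, rank-one maps along the six edges, with an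
extra scalar `t` on the edge `(1,2,2) → (1,1,2)`, give a graded nilpotent tuple in which all
products vanish. A graded automorphism conjugating the tuple for `t` into the one for `s` must act
on the three bottom vectors by scalars read off from the images of the top vectors; going around
the hexagon these scalars all agree, and then the edge carrying the parameter forces `t = s`.
Since `K` is infinite, this gives infinitely many classes. -/

open Module

section Defs

variable {K : Type*} [Field K] {k : ℕ} {V : Type*} [AddCommGroup V] [Module K V]

/-- The `i`-th standard basis vector of `ℤ^k`. -/
def stdE (k : ℕ) (i : Fin k) : Fin k → ℤ := fun j => if j = i then 1 else 0

/-- A `k`-graded nilpotent tuple on a `k`-graded vector space: a tuple of pairwise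
commuting nilpotent endomorphisms, the `i`-th of which lowers the `i`-th degree by one. -/
def IsGradedNilTuple (grading : (Fin k → ℤ) → Submodule K V)
    (φ : Fin k → Module.End K V) : Prop :=
  (∀ i j, Commute (φ i) (φ j)) ∧ (∀ i, IsNilpotent (φ i)) ∧
    ∀ i x, (grading x).map (φ i) ≤ grading (x - stdE k i)

/-- The type of `k`-graded nilpotent tuples for a given grading. -/
def GradedNilTuple (grading : (Fin k → ℤ) → Submodule K V) :=
  { φ : Fin k → Module.End K V // IsGradedNilTuple grading φ }

/-- Base-change equivalence of graded nilpotent tuples: conjugation by a linear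
automorphism preserving every homogeneous component. -/
def BaseChangeRel (grading : (Fin k → ℤ) → Submodule K V)
    (φ ψ : GradedNilTuple grading) : Prop :=
  ∃ g : V ≃ₗ[K] V, (∀ x, (grading x).map (g : V →ₗ[K] V) = grading x) ∧
    ∀ i, ψ.1 i = (g : V →ₗ[K] V) ∘ₗ φ.1 i ∘ₗ (g.symm : V →ₗ[K] V)

/-- The shape of a graded vector space: all `s ∈ (ℤ≥1)^k` dominated by the index of
some nonzero homogeneous component. -/
def shapeOf (grading : (Fin k → ℤ) → Submodule K V) : Set (Fin k → ℤ) :=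
  {s | (∀ i, 1 ≤ s i) ∧ ∃ p : Fin k → ℤ, (∀ i, s i ≤ p i) ∧ grading p ≠ ⊥}

end Defs

/-- A `k`-graded finite-dimensional vector space over `K`: an internal direct sum
decomposition indexed by `ℤ^k`, supported on indices with all coordinates `≥ 1`. -/
structure GradedVS (K : Type*) [Field K] (k : ℕ) where
  V : Type
  [instAdd : AddCommGroup V]
  [instMod : Module K V]
  [instFin : FiniteDimensional K V]
  grading : (Fin k → ℤ) → Submodule K V
  internal : DirectSum.IsInternal grading
  supp : ∀ x : Fin k → ℤ, (∃ i, x i < 1) → grading x = ⊥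

attribute [instance] GradedVS.instAdd GradedVS.instMod GradedVS.instFin

/-- Componentwise comparison of partitions (parts beyond the length count as `0`). -/
def partLE (L L' : List ℕ) : Prop := ∀ i : ℕ, L.getD i 0 ≤ L'.getD i 0

/-- The flat 3-dimensional Young diagram encoded by a pair of partitions with equal
first parts: `{(i,1,j) : 1 ≤ j ≤ λ_i} ∪ {(1,i,j) : 1 ≤ j ≤ μ_i}`. -/
def FlatDiagram (L M : List ℕ) : Set (Fin 3 → ℤ) :=
  {s | (s 1 = 1 ∧ 1 ≤ s 0 ∧ 1 ≤ s 2 ∧ s 0 ≤ (L.length : ℤ) ∧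
          s 2 ≤ (L.getD ((s 0).toNat - 1) 0 : ℤ)) ∨
       (s 0 = 1 ∧ 1 ≤ s 1 ∧ 1 ≤ s 2 ∧ s 1 ≤ (M.length : ℤ) ∧
          s 2 ≤ (M.getD ((s 1).toNat - 1) 0 : ℤ))}

/-- A `k`-dimensional Young diagram: a finite, downward-closed subset of `(ℤ≥1)^k`. -/
def IsYoungDiagram {k : ℕ} (Λ : Set (Fin k → ℤ)) : Prop :=
  Λ.Finite ∧ (∀ x ∈ Λ, ∀ i, 1 ≤ x i) ∧
    ∀ x ∈ Λ, ∀ y : Fin k → ℤ, (∀ i, 1 ≤ y i) → (∀ i, y i ≤ x i) → y ∈ Λ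

/-- A 3-dimensional Young diagram is flat if, after permuting coordinates, every point
has a `1` in one of two fixed coordinate directions. -/
def IsFlat (Λ : Set (Fin 3 → ℤ)) : Prop :=
  ∃ i j : Fin 3, i ≠ j ∧ ∀ x ∈ Λ, x i = 1 ∨ x j = 1

/-- The Young diagram `Y(λ) ⊆ (ℤ≥1)²` of a partition given as a list. -/
def YoungSet (L : List ℕ) : Set (Fin 2 → ℤ) :=
  {s | 1 ≤ s 0 ∧ 1 ≤ s 1 ∧ s 0 ≤ (L.length : ℤ) ∧
       s 1 ≤ (L.getD ((s 0).toNat - 1) 0 : ℤ)}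

section

variable {K : Type*} [Field K] {V : Type*} [AddCommGroup V] [Module K V]

theorem DirectSum.IsInternal.exists_dual_eq_one {ι : Type*} [DecidableEq ι]
    {A : ι → Submodule K V} (hA : DirectSum.IsInternal A) {x : ι} {a : V} (ha : a ∈ A x)
    (ha0 : a ≠ 0) : ∃ f : Dual K V, f a = 1 ∧ ∀ y ≠ x, A y ≤ LinearMap.ker f := by
  have haN : a ∉ ⨆ (y) (_ : y ≠ x), A y := fun h =>
    ha0 ((Submodule.disjoint_def.mp (hA.submodule_iSupIndep x)) a ha h)
  obtain ⟨f, hfa, hf⟩ := Submodule.exists_dual_map_eq_bot_of_notMem haN inferInstance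
  refine ⟨(f a)⁻¹ • f, inv_mul_cancel₀ hfa, fun y hy m hm => ?_⟩
  have hmN : m ∈ ⨆ (y) (_ : y ≠ x), A y := le_iSup₂ (f := fun y (_ : y ≠ x) => A y) y hy hm
  have hfm : f m = 0 := (Submodule.mem_bot K).mp (hf ▸ Submodule.mem_map_of_mem hmN)
  simp [hfm]

theorem BaseChangeRel.equivalence {k : ℕ} (grading : (Fin k → ℤ) → Submodule K V) :
    Equivalence (BaseChangeRel grading) where
  refl _ := ⟨LinearEquiv.refl K V, fun x => Submodule.map_id _, fun _ => rfl⟩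
  symm := by
    rintro φ ψ ⟨g, hg, hconj⟩
    refine ⟨g.symm, fun x => ?_, fun i => ?_⟩
    · conv_lhs => rw [← hg x]
      rw [← Submodule.map_comp]
      convert Submodule.map_id (grading x)
      ext m; simp
    · rw [hconj i]; ext m; simp
  trans := by
    rintro φ ψ χ ⟨g₁, hg₁, hconj₁⟩ ⟨g₂, hg₂, hconj₂⟩
    refine ⟨g₁.trans g₂, fun x => ?_, fun i => ?_⟩
    · rw [LinearEquiv.coe_trans, Submodule.map_comp, hg₁, hg₂]
    · rw [hconj₂ i, hconj₁ i]; ext m; simp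

theorem Submodule.map_smulRight_le {k : ℕ} {grading : (Fin k → ℤ) → Submodule K V}
    {f : Dual K V} {x : Fin k → ℤ} (hf : ∀ z ≠ x, grading z ≤ LinearMap.ker f)
    {y : V} {i : Fin k} (hy : y ∈ grading (x - stdE k i)) (z : Fin k → ℤ) :
    (grading z).map (f.smulRight y) ≤ grading (z - stdE k i) := by
  rintro _ ⟨m, hm, rfl⟩
  by_cases hz : z = x
  · subst hz
    exact Submodule.smul_mem _ _ hy
  · simp [LinearMap.mem_ker.mp (hf z hz hm)]

structure HexagonData (grading : (Fin 3 → ℤ) → Submodule K V) where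
  (u v w a b c : V)
  (fa fb fc : Dual K V)
  u_mem : u ∈ grading ![2, 1, 1]
  v_mem : v ∈ grading ![1, 2, 1]
  w_mem : w ∈ grading ![1, 1, 2]
  a_mem : a ∈ grading ![2, 2, 1]
  b_mem : b ∈ grading ![2, 1, 2]
  c_mem : c ∈ grading ![1, 2, 2]
  u_ne_zero : u ≠ 0
  v_ne_zero : v ≠ 0
  w_ne_zero : w ≠ 0
  fa_a : fa a = 1
  fb_b : fb b = 1
  fc_c : fc c = 1
  le_ker_fa : ∀ z ≠ ![2, 2, 1], grading z ≤ LinearMap.ker fa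
  le_ker_fb : ∀ z ≠ ![2, 1, 2], grading z ≤ LinearMap.ker fb
  le_ker_fc : ∀ z ≠ ![1, 2, 2], grading z ≤ LinearMap.ker fc

namespace HexagonData

variable {grading : (Fin 3 → ℤ) → Submodule K V} (D : HexagonData grading)

theorem nonempty (hV : DirectSum.IsInternal grading)
    (hu : grading ![2, 1, 1] ≠ ⊥) (hv : grading ![1, 2, 1] ≠ ⊥) (hw : grading ![1, 1, 2] ≠ ⊥)
    (ha : grading ![2, 2, 1] ≠ ⊥) (hb : grading ![2, 1, 2] ≠ ⊥) (hc : grading ![1, 2, 2] ≠ ⊥) :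
    Nonempty (HexagonData grading) := by
  obtain ⟨u, u_mem, u_ne_zero⟩ := (Submodule.ne_bot_iff _).mp hu
  obtain ⟨v, v_mem, v_ne_zero⟩ := (Submodule.ne_bot_iff _).mp hv
  obtain ⟨w, w_mem, w_ne_zero⟩ := (Submodule.ne_bot_iff _).mp hw
  obtain ⟨a, a_mem, ha0⟩ := (Submodule.ne_bot_iff _).mp ha
  obtain ⟨b, b_mem, hb0⟩ := (Submodule.ne_bot_iff _).mp hb
  obtain ⟨c, c_mem, hc0⟩ := (Submodule.ne_bot_iff _).mp hc
  obtain ⟨fa, fa_a, le_ker_fa⟩ := hV.exists_dual_eq_one a_mem ha0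
  obtain ⟨fb, fb_b, le_ker_fb⟩ := hV.exists_dual_eq_one b_mem hb0
  obtain ⟨fc, fc_c, le_ker_fc⟩ := hV.exists_dual_eq_one c_mem hc0
  exact ⟨⟨u, v, w, a, b, c, fa, fb, fc, u_mem, v_mem, w_mem, a_mem, b_mem, c_mem,
    u_ne_zero, v_ne_zero, w_ne_zero, fa_a, fb_b, fc_c, le_ker_fa, le_ker_fb, le_ker_fc⟩⟩

def tuple (t : K) : Fin 3 → Module.End K V :=
  ![D.fa.smulRight D.v + D.fb.smulRight D.w,
    D.fa.smulRight D.u + D.fc.smulRight (t • D.w),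
    D.fb.smulRight D.u + D.fc.smulRight D.v]

theorem tuple_mul_tuple (t : K) (i j : Fin 3) : D.tuple t i * D.tuple t j = 0 := by
  have := LinearMap.mem_ker.mp (D.le_ker_fa _ (by decide) D.u_mem)
  have := LinearMap.mem_ker.mp (D.le_ker_fa _ (by decide) D.v_mem)
  have := LinearMap.mem_ker.mp (D.le_ker_fa _ (by decide) D.w_mem)
  have := LinearMap.mem_ker.mp (D.le_ker_fb _ (by decide) D.u_mem)
  have := LinearMap.mem_ker.mp (D.le_ker_fb _ (by decide) D.v_mem)
  have := LinearMap.mem_ker.mp (D.le_ker_fb _ (by decide) D.w_mem)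
  have := LinearMap.mem_ker.mp (D.le_ker_fc _ (by decide) D.u_mem)
  have := LinearMap.mem_ker.mp (D.le_ker_fc _ (by decide) D.v_mem)
  have := LinearMap.mem_ker.mp (D.le_ker_fc _ (by decide) D.w_mem)
  ext m
  fin_cases i <;> fin_cases j <;> simp [tuple, *]

theorem isGradedNilTuple (t : K) : IsGradedNilTuple grading (D.tuple t) := by
  refine ⟨fun i j => (D.tuple_mul_tuple t i j).trans (D.tuple_mul_tuple t j i).symm,
    fun i => ⟨2, (pow_two _).trans (D.tuple_mul_tuple t i i)⟩, fun i z => ?_⟩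
  fin_cases i
  · exact (Submodule.map_add_le _ _ _).trans <| sup_le
      (Submodule.map_smulRight_le D.le_ker_fa (by convert D.v_mem using 2; decide) z)
      (Submodule.map_smulRight_le D.le_ker_fb (by convert D.w_mem using 2; decide) z)
  · exact (Submodule.map_add_le _ _ _).trans <| sup_le
      (Submodule.map_smulRight_le D.le_ker_fa (by convert D.u_mem using 2; decide) z)
      (Submodule.map_smulRight_le D.le_ker_fc
        (by convert Submodule.smul_mem _ t D.w_mem using 2; decide) z)
  · exact (Submodule.map_add_le _ _ _).trans <| sup_le
      (Submodule.map_smulRight_le D.le_ker_fb (by convert D.u_mem using 2; decide) z)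
      (Submodule.map_smulRight_le D.le_ker_fc (by convert D.v_mem using 2; decide) z)

def gradedNilTuple (t : K) : GradedNilTuple grading := ⟨D.tuple t, D.isGradedNilTuple t⟩

variable {m : V} (t : K) (i : Fin 3)

theorem tuple_apply_of_mem_a (hm : m ∈ grading ![2, 2, 1]) :
    D.tuple t i m = D.fa m • ![D.v, D.u, 0] i := by
  have := LinearMap.mem_ker.mp (D.le_ker_fb _ (by decide) hm)
  have := LinearMap.mem_ker.mp (D.le_ker_fc _ (by decide) hm)
  fin_cases i <;> simp [tuple, *]

theorem tuple_apply_of_mem_b (hm : m ∈ grading ![2, 1, 2]) :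
    D.tuple t i m = D.fb m • ![D.w, 0, D.u] i := by
  have := LinearMap.mem_ker.mp (D.le_ker_fa _ (by decide) hm)
  have := LinearMap.mem_ker.mp (D.le_ker_fc _ (by decide) hm)
  fin_cases i <;> simp [tuple, *]

theorem tuple_apply_of_mem_c (hm : m ∈ grading ![1, 2, 2]) :
    D.tuple t i m = D.fc m • ![0, t • D.w, D.v] i := by
  have := LinearMap.mem_ker.mp (D.le_ker_fa _ (by decide) hm)
  have := LinearMap.mem_ker.mp (D.le_ker_fb _ (by decide) hm)
  fin_cases i <;> simp [tuple, *]

theorem eq_of_baseChangeRel {t s : K}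
    (h : BaseChangeRel grading (D.gradedNilTuple t) (D.gradedNilTuple s)) : t = s := by
  obtain ⟨g, hg, hconj⟩ := h
  have g_comm : ∀ i m, D.tuple s i (g m) = g (D.tuple t i m) := fun i m => by
    simpa [gradedNilTuple] using LinearMap.congr_fun (hconj i) (g m)
  have g_mem : ∀ {z m}, m ∈ grading z → g m ∈ grading z := fun {z _} hm =>
    hg z ▸ Submodule.mem_map_of_mem hm
  set α := D.fa (g D.a)
  set β := D.fb (g D.b)
  set γ := D.fc (g D.c)
  have at_a (i) : α • ![D.v, D.u, 0] i = g (![D.v, D.u, 0] i) := by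
    simpa [D.tuple_apply_of_mem_a _ _ (g_mem D.a_mem), D.tuple_apply_of_mem_a _ _ D.a_mem,
      D.fa_a] using g_comm i D.a
  have at_b (i) : β • ![D.w, 0, D.u] i = g (![D.w, 0, D.u] i) := by
    simpa [D.tuple_apply_of_mem_b _ _ (g_mem D.b_mem), D.tuple_apply_of_mem_b _ _ D.b_mem,
      D.fb_b] using g_comm i D.b
  have at_c (i) : γ • ![0, s • D.w, D.v] i = g (![0, t • D.w, D.v] i) := by
    simpa [D.tuple_apply_of_mem_c _ _ (g_mem D.c_mem), D.tuple_apply_of_mem_c _ _ D.c_mem,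
      D.fc_c] using g_comm i D.c
  have hv : α • D.v = g D.v := at_a 0
  have hu : α • D.u = g D.u := at_a 1
  have hw : β • D.w = g D.w := at_b 0
  have hu' : β • D.u = g D.u := at_b 2
  have hw' : γ • s • D.w = g (t • D.w) := at_c 1
  have hv' : γ • D.v = g D.v := at_c 2
  have hβ : β = α := smul_left_injective K D.u_ne_zero (hu'.trans hu.symm)
  have hγ : γ = α := smul_left_injective K D.v_ne_zero (hv'.trans hv.symm)
  have hα : α ≠ 0 := fun h0 => D.v_ne_zero (g.map_eq_zero_iff.mp (by rw [← hv, h0, zero_smul]))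
  have hαs : (α * s) • D.w = (α * t) • D.w := by
    rw [mul_smul, ← hγ, hw', map_smul, ← hw, hβ, hγ, smul_smul, mul_comm]
  exact (mul_left_cancel₀ hα (smul_left_injective K D.w_ne_zero hαs)).symm

end HexagonData

end

/-- if all six components `V_{(2,1,1)}, V_{(1,2,1)}, V_{(1,1,2)},
V_{(2,2,1)}, V_{(2,1,2)}, V_{(1,2,2)}` are nonzero, there are infinitely many
tri-graded nilpotent tuples up to base change (non-flat case, Boos §5.1). -/
theorem statement3 (K : Type*) [Field K] [IsAlgClosed K] (W : GradedVS K 3)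
    (h1 : W.grading ![2, 1, 1] ≠ ⊥) (h2 : W.grading ![1, 2, 1] ≠ ⊥)
    (h3 : W.grading ![1, 1, 2] ≠ ⊥) (h4 : W.grading ![2, 2, 1] ≠ ⊥)
    (h5 : W.grading ![2, 1, 2] ≠ ⊥) (h6 : W.grading ![1, 2, 2] ≠ ⊥) :
    Infinite (Quot (BaseChangeRel W.grading)) := by
  obtain ⟨D⟩ := HexagonData.nonempty W.internal h1 h2 h3 h4 h5 h6
  refine Infinite.of_injective (fun t : K => Quot.mk _ (D.gradedNilTuple t)) fun t s hts => ?_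
  exact D.eq_of_baseChangeRel <|
    (BaseChangeRel.equivalence W.grading).eqvGen_iff.mp (Quot.eqvGen_exact hts)
end

section
/- Let K be an algebraically closed field and let V be a 4-graded vector space over K such that dim V_{(1,1,1,1)} ≥ 2 and the components V_{(2,1,1,1)}, V_{(1,2,1,1)}, V_{(1,1,2,1)}, V_{(1,1,1,2)} are all nonzero. Then the quotient of the set of 4-graded nilpotent tuples on V by base-change equivalence is an infinite set. -/
open Module

/-!
Fix two linearly independent vectors `v, w ∈ V_{(1,1,1,1)}` and, for each neighbour
`X_i = (1,1,1,1) + e_i`, a functional `ℓ_i` supported on `V_{X_i}`. For `t ∈ K` the rank-one maps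
`φ_i = ℓ_i(·) • T_i` with targets `T = (v, w, v + w, v + t w)` form a graded nilpotent tuple, all
of whose products vanish. Conjugating one such tuple into another rescales each target, so it
carries the four lines spanned by `T` onto those of the other tuple; since a linear map fixing
the lines of `v`, `w` and `v + w` is a scalar, the cross-ratio `t` is an invariant. As `K` is
infinite, this gives infinitely many classes.
-/

section BaseChange

variable {K : Type*} [Field K] {k : ℕ} {V : Type*} [AddCommGroup V] [Module K V]

lemma baseChangeRel_equivalence (grading : (Fin k → ℤ) → Submodule K V) :
    Equivalence (BaseChangeRel grading) where
  refl _ := ⟨LinearEquiv.refl K V, fun _ => Submodule.map_id _, fun _ => by ext; simp⟩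
  symm := by
    rintro φ ψ ⟨g, hg, hc⟩
    refine ⟨g.symm, fun x => ?_, fun i => ?_⟩
    · exact (Submodule.map_symm_eq_iff g).mpr (hg x)
    · ext z; simp [hc i]
  trans := by
    rintro φ ψ χ ⟨g₁, hg₁, hc₁⟩ ⟨g₂, hg₂, hc₂⟩
    refine ⟨g₁.trans g₂, fun x => ?_, fun i => ?_⟩
    · rw [LinearEquiv.coe_trans, Submodule.map_comp, hg₁, hg₂]
    · ext z; simp [hc₁ i, hc₂ i]

end BaseChange

lemma exists_dual_eq_one_of_mem_of_isInternal {ι : Type*} [DecidableEq ι]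
    {K V : Type*} [Field K] [AddCommGroup V] [Module K V] {grading : ι → Submodule K V}
    (hgr : DirectSum.IsInternal grading) {x : ι} {u : V} (hu : u ∈ grading x) (hu₀ : u ≠ 0) :
    ∃ ℓ : Dual K V, ℓ u = 1 ∧ ∀ y ≠ x, ∀ z ∈ grading y, ℓ z = 0 := by
  let := hgr.chooseDecomposition
  let π : V →ₗ[K] grading x := DirectSum.component K ι (fun i => grading i) x ∘ₗ
    (DirectSum.decomposeLinearEquiv grading).toLinearMap
  have hπ : ∀ y z, z ∈ grading y → (π z : V) = if y = x then z else 0 := by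
    intro y z hz
    simp only [π, LinearMap.comp_apply, LinearEquiv.coe_coe, DirectSum.decomposeLinearEquiv_apply,
      ← DirectSum.apply_eq_component]
    split_ifs with hyx
    · subst hyx; exact DirectSum.decompose_of_mem_same grading hz
    · exact DirectSum.decompose_of_mem_ne grading hz hyx
  obtain ⟨f, hf⟩ := Projective.exists_dual_eq_one K (x := (⟨u, hu⟩ : grading x))
    (by simpa using hu₀)
  refine ⟨f ∘ₗ π, ?_, fun y hy z hz => ?_⟩
  · have : π u = ⟨u, hu⟩ := Subtype.ext (by simpa using hπ x u hu)
    simpa [this] using hf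
  · have : π z = 0 := Subtype.ext (by simpa [hy] using hπ y z hz)
    simp [this]

lemma exists_linearIndependent_pair_mem_of_two_le_finrank {K V : Type*} [Field K]
    [AddCommGroup V] [Module K V] {p : Submodule K V} (h : 2 ≤ finrank K p) :
    ∃ v ∈ p, ∃ w ∈ p, LinearIndependent K ![v, w] := by
  obtain ⟨b, hb⟩ := exists_linearIndependent_of_le_finrank (R := K) h
  refine ⟨b 0, (b 0).2, b 1, (b 1).2, ?_⟩
  have hpair : ![(b 0 : V), b 1] = p.subtype ∘ b := by
    ext i
    fin_cases i <;> rfl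
  exact hpair ▸ hb.map' p.subtype p.ker_subtype

section RankOneTuple

variable {K : Type*} [Field K] {V : Type*} [AddCommGroup V] [Module K V] {ι : Type*}

def rankOneTuple (ℓ : ι → Dual K V) (T : ι → V) : ι → End K V :=
  fun i => (ℓ i).smulRight (T i)

@[simp]
lemma rankOneTuple_apply (ℓ : ι → Dual K V) (T : ι → V) (i : ι) (z : V) :
    rankOneTuple ℓ T i z = ℓ i z • T i :=
  rfl

lemma rankOneTuple_mul_eq_zero {ℓ : ι → Dual K V} {T : ι → V} (h : ∀ i j, ℓ i (T j) = 0)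
    (i j : ι) : rankOneTuple ℓ T i * rankOneTuple ℓ T j = 0 := by
  ext z
  simp [h]

lemma exists_smul_of_rankOneTuple_eq_conj {ℓ : ι → Dual K V} {T T' u : ι → V}
    (hu : ∀ i, ℓ i (u i) = 1) (g : V ≃ₗ[K] V)
    (hg : ∀ i, rankOneTuple ℓ T' i = (g : End K V) ∘ₗ rankOneTuple ℓ T i ∘ₗ g.symm) :
    ∃ c : ι → K, ∀ i, g (T i) = c i • T' i := by
  refine ⟨fun i => ℓ i (g (u i)), fun i => ?_⟩
  simpa [hu] using (LinearMap.congr_fun (hg i) (g (u i))).symm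

end RankOneTuple

lemma sub_stdE_ne_self {k : ℕ} (x : Fin k → ℤ) (i : Fin k) : x - stdE k i ≠ x := by
  intro h
  simpa [stdE] using congrFun h i

lemma isGradedNilTuple_rankOneTuple {K : Type*} [Field K] {V : Type*} [AddCommGroup V]
    [Module K V] {k : ℕ} {grading : (Fin k → ℤ) → Submodule K V} {ℓ : Fin k → Dual K V}
    {T : Fin k → V} {X : Fin k → Fin k → ℤ} {o : Fin k → ℤ} (hX : ∀ i, X i - stdE k i = o)
    (hT : ∀ i, T i ∈ grading o) (hℓ : ∀ i, ∀ y ≠ X i, ∀ z ∈ grading y, ℓ i z = 0) :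
    IsGradedNilTuple grading (rankOneTuple ℓ T) := by
  have hℓT : ∀ i j, ℓ i (T j) = 0 := fun i j =>
    hℓ i o (hX i ▸ sub_stdE_ne_self (X i) i) _ (hT j)
  refine ⟨fun i j => ?_, fun i => ⟨2, ?_⟩, fun i x => ?_⟩
  · rw [Commute, SemiconjBy, rankOneTuple_mul_eq_zero hℓT, rankOneTuple_mul_eq_zero hℓT]
  · rw [sq, rankOneTuple_mul_eq_zero hℓT]
  · rintro _ ⟨z, hz, rfl⟩
    by_cases hx : x = X i
    · subst hx
      exact (hX i).symm ▸ Submodule.smul_mem _ _ (hT i)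
    · simp [hℓ i x hx z hz]

section Quadruple

variable {K : Type*} [Field K] {V : Type*} [AddCommGroup V] [Module K V]

/-- Four points of the projective line `ℙ(K v ⊕ K w)` with cross-ratio `t`. -/
def quadruple (v w : V) (t : K) : Fin 4 → V := ![v, w, v + w, v + t • w]

lemma quadruple_mem {p : Submodule K V} {v w : V} (hv : v ∈ p) (hw : w ∈ p) (t : K) (i : Fin 4) :
    quadruple v w t i ∈ p := by
  fin_cases i
  exacts [hv, hw, add_mem hv hw, add_mem hv (p.smul_mem t hw)]

lemma eq_of_map_quadruple_eq_smul {v w : V} (hvw : LinearIndependent K ![v, w])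
    {f : V →ₗ[K] V} (hf : f v ≠ 0) {t t' : K} {c : Fin 4 → K}
    (h : ∀ i, f (quadruple v w t i) = c i • quadruple v w t' i) : t = t' := by
  have hv : f v = c 0 • v := h 0
  have hw : f w = c 1 • w := h 1
  obtain ⟨h02, h12⟩ : c 0 = c 2 ∧ c 1 = c 2 := by
    refine hvw.eq_of_pair ?_
    have := h 2
    simp only [quadruple, Matrix.cons_val, map_add, hv, hw] at this
    rw [this, smul_add]
  obtain ⟨h03, h3⟩ : c 0 = c 3 ∧ t * c 1 = c 3 * t' := by
    refine hvw.eq_of_pair ?_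
    have := h 3
    simp only [quadruple, Matrix.cons_val, map_add, map_smul, hv, hw] at this
    rw [mul_smul, mul_smul, this, smul_add]
  have hc₀ : c 0 ≠ 0 := fun h0 => hf (by simp [hv, h0])
  have h01 : c 0 = c 1 := h02.trans h12.symm
  apply mul_right_cancel₀ hc₀
  rw [h01, h3, ← h03, h01, mul_comm]

end Quadruple

/-- a 4-graded vector space whose dimension vector dominates the
minimal nullroot of `D̃₄` (entry 2 at `(1,1,1,1)`, entries 1 at its four
neighbours) has infinitely many 4-graded nilpotent tuples up to base change. -/
theorem statement6 (K : Type*) [Field K] [IsAlgClosed K] (W : GradedVS K 4)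
    (h0 : 2 ≤ Module.finrank K (W.grading ![1, 1, 1, 1]))
    (h1 : W.grading ![2, 1, 1, 1] ≠ ⊥) (h2 : W.grading ![1, 2, 1, 1] ≠ ⊥)
    (h3 : W.grading ![1, 1, 2, 1] ≠ ⊥) (h4 : W.grading ![1, 1, 1, 2] ≠ ⊥) :
    Infinite (Quot (BaseChangeRel W.grading)) := by
  let X : Fin 4 → Fin 4 → ℤ := ![![2, 1, 1, 1], ![1, 2, 1, 1], ![1, 1, 2, 1], ![1, 1, 1, 2]]
  have hX : ∀ i, X i - stdE 4 i = ![1, 1, 1, 1] := by decide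
  have hX_ne_bot : ∀ i, W.grading (X i) ≠ ⊥ := by
    intro i
    fin_cases i
    exacts [h1, h2, h3, h4]
  choose u hu hu₀ using fun i => (Submodule.ne_bot_iff _).mp (hX_ne_bot i)
  choose ℓ hℓu hℓ using fun i =>
    exists_dual_eq_one_of_mem_of_isInternal W.internal (hu i) (hu₀ i)
  obtain ⟨v, hv, w, hw, hvw⟩ := exists_linearIndependent_pair_mem_of_two_le_finrank h0
  let F : K → Quot (BaseChangeRel W.grading) := fun t =>
    Quot.mk _ ⟨rankOneTuple ℓ (quadruple v w t),
      isGradedNilTuple_rankOneTuple hX (quadruple_mem hv hw t) hℓ⟩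
  refine Infinite.of_injective F fun t t' hF => ?_
  obtain ⟨g, -, hg⟩ := (baseChangeRel_equivalence W.grading).eqvGen_iff.mp (Quot.eq.mp hF)
  obtain ⟨c, hc⟩ := exists_smul_of_rankOneTuple_eq_conj hℓu g hg
  exact eq_of_map_quadruple_eq_smul hvw (f := g) (by simpa using hvw.ne_zero 0) hc
end

section
/- Let K be an algebraically closed field and let V be a 4-graded vector space over K with sh(V) = {(1,1,1,1), (2,1,1,1), (1,2,1,1), (1,1,2,1), (1,1,1,2)}. Then the quotient of the set of 4-graded nilpotent tuples on V by base-change equivalence is a finite set if and only if it is NOT the case that dim V_{(1,1,1,1)} ≥ 2 and dim V_{(2,1,1,1)}, dim V_{(1,2,1,1)}, dim V_{(1,1,2,1)}, dim V_{(1,1,1,2)} are all ≥ 1 (i.e., if and only if the dimension vector of V does not dominate, componentwise, the vector with entry 2 at (1,1,1,1) and entry 1 at the other four points). -/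
/-!
Every nonzero component lies in the shape, so only the centre `c = (1,1,1,1)` and the four
arms `c + eᵢ` (which are maximal in the shape, hence nonzero) carry nonzero components, and
`φᵢ` can only map `V_{c+eᵢ}` to `V_c`. Thus a graded nilpotent tuple is just four linear maps
`V_{c+eᵢ} → V_c`, extended by zero, and base change acts on them through `GL(V_{c+eᵢ})` and
`GL(V_c)`.

If `dim V_c ≤ 1`, a map into `V_c` is determined up to `GL(V_{c+eᵢ})` by whether it vanishes,
so there are at most `2⁴` classes. If `dim V_c ≥ 2`, pick independent `u, v ∈ V_c`; rank-one
maps with images the lines through `u`, `v`, `u + v`, `u + t • v` give tuples for `t ∈ K` that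
are pairwise inequivalent, since an automorphism preserving the first three lines is a scalar
on their span and so fixes the fourth (the cross-ratio `t` is invariant). As `K` is infinite,
there are infinitely many classes.
-/

open Module

section LinearAlgebra

open LinearMap

variable {K V W : Type*} [Field K] [AddCommGroup V] [Module K V] [AddCommGroup W] [Module K W]

theorem LinearMap.exists_linearEquiv_range_prod_ker (f : V →ₗ[K] W) :
    ∃ E : V ≃ₗ[K] range f × ker f, ∀ v, ((E v).1 : W) = f v := by
  obtain ⟨C, hC⟩ := (ker f).exists_isCompl
  refine ⟨equivProdOfSurjectiveOfIsCompl f.rangeRestrict ((ker f).projectionOnto C hC)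
    f.range_rangeRestrict (Submodule.range_projectionOnto hC) ?_, fun v => rfl⟩
  rwa [ker_rangeRestrict, Submodule.ker_projectionOnto]

theorem LinearMap.exists_linearEquiv_comp_eq_of_range_eq [FiniteDimensional K V]
    {f g : V →ₗ[K] W} (h : range f = range g) : ∃ e : V ≃ₗ[K] V, g ∘ₗ e = f := by
  obtain ⟨Ef, hEf⟩ := f.exists_linearEquiv_range_prod_ker
  obtain ⟨Eg, hEg⟩ := g.exists_linearEquiv_range_prod_ker
  have hker : finrank K (ker f) = finrank K (ker g) := by
    have := f.finrank_range_add_finrank_ker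
    have := g.finrank_range_add_finrank_ker
    rw [h] at *
    omega
  obtain ⟨j⟩ := FiniteDimensional.nonempty_linearEquiv_of_finrank_eq hker
  refine ⟨Ef ≪≫ₗ (LinearEquiv.ofEq _ _ h).prodCongr j ≪≫ₗ Eg.symm, LinearMap.ext fun v => ?_⟩
  simp [← hEg, hEf]

theorem Submodule.eq_bot_or_eq_of_le_of_finrank_le_one {p U : Submodule K V}
    [FiniteDimensional K U] (hle : p ≤ U) (hU : finrank K U ≤ 1) : p = ⊥ ∨ p = U := by
  have := Submodule.finiteDimensional_of_le hle
  refine or_iff_not_imp_left.2 fun hp => Submodule.eq_of_le_of_finrank_le hle ?_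
  have := Submodule.one_le_finrank_iff.2 hp
  omega

theorem LinearMap.range_eq_range_of_finrank_le_one {U : Submodule K W} [FiniteDimensional K U]
    (hU : finrank K U ≤ 1) {f g : V →ₗ[K] W} (hf : range f ≤ U) (hg : range g ≤ U)
    (h : f = 0 ↔ g = 0) : range f = range g := by
  rcases Submodule.eq_bot_or_eq_of_le_of_finrank_le_one hf hU with hf' | hf' <;>
  rcases Submodule.eq_bot_or_eq_of_le_of_finrank_le_one hg hU with hg' | hg'
  all_goals simp_all [range_eq_bot]

theorem LinearMap.range_eq_map_of_comp_eq {f g : V →ₗ[K] V} (e : V ≃ₗ[K] V)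
    (h : g ∘ₗ e = e ∘ₗ f) : range g = (range f).map (e : V →ₗ[K] V) := by
  rw [← range_comp_of_range_eq_top g e.range, h, range_comp]

theorem LinearIndependent.eq_of_apply_mem_span_singleton {u v : V}
    (huv : LinearIndependent K ![u, v])
    {g : V →ₗ[K] V} (hg : Function.Injective g) {t t' : K} (hu : g u ∈ K ∙ u)
    (hv : g v ∈ K ∙ v) (hsum : g (u + v) ∈ K ∙ (u + v))
    (ht : g (u + t • v) ∈ K ∙ (u + t' • v)) : t = t' := by
  obtain ⟨a, ha⟩ := Submodule.mem_span_singleton.1 hu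
  obtain ⟨b, hb⟩ := Submodule.mem_span_singleton.1 hv
  obtain ⟨c, hc⟩ := Submodule.mem_span_singleton.1 hsum
  obtain ⟨d, hd⟩ := Submodule.mem_span_singleton.1 ht
  have ha0 : a ≠ 0 := by
    rintro rfl
    exact huv.ne_zero 0 (hg (by simpa using ha.symm))
  rw [map_add, ← ha, ← hb] at hc
  rw [map_add, map_smul, ← ha, ← hb] at hd
  rw [LinearIndependent.pair_iff] at huv
  obtain ⟨hac, hbc⟩ := huv (a - c) (b - c) (by linear_combination (norm := module) -hc)
  obtain ⟨had, htd⟩ := huv (a - d) (t * b - d * t') (by linear_combination (norm := module) -hd)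
  apply mul_left_cancel₀ ha0
  linear_combination htd + t * (hac - hbc) - t' * had

end LinearAlgebra

namespace DirectSum.IsInternal

variable {R M ι : Type*} [Semiring R] [AddCommMonoid M] [Module R M] [DecidableEq ι]
  {A : ι → Submodule R M} (h : IsInternal A)
include h

theorem linearMap_ext {N : Type*} [AddCommMonoid N] [Module R N] {f g : M →ₗ[R] N}
    (hfg : ∀ i, ∀ w ∈ A i, f w = g w) : f = g :=
  LinearMap.ext_on (s := ⋃ i, (A i : Set M))
    (by rw [← Submodule.iSup_eq_span, h.submodule_iSup_eq_top])
    fun _ hw => let ⟨i, hi⟩ := Set.mem_iUnion.1 hw; hfg i _ hi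

noncomputable def proj (i : ι) : M →ₗ[R] A i :=
  component R ι (fun i => A i) i ∘ₗ (LinearEquiv.ofBijective (coeLinearMap A) h).symm

theorem proj_apply_of_mem {i : ι} {w : M} (hw : w ∈ A i) : h.proj i w = ⟨w, hw⟩ :=
  h.ofBijective_coeLinearMap_of_mem hw

theorem proj_apply_of_mem_ne {i j : ι} (hij : i ≠ j) {w : M} (hw : w ∈ A i) : h.proj j w = 0 :=
  h.ofBijective_coeLinearMap_of_mem_ne hij hw

noncomputable def congrComponents (u : ∀ i, A i ≃ₗ[R] A i) : M ≃ₗ[R] M :=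
  (LinearEquiv.ofBijective (coeLinearMap A) h).symm ≪≫ₗ DFinsupp.mapRange.linearEquiv u ≪≫ₗ
    LinearEquiv.ofBijective (coeLinearMap A) h

theorem congrComponents_apply_of_mem (u : ∀ i, A i ≃ₗ[R] A i) {i : ι} {w : M} (hw : w ∈ A i) :
    h.congrComponents u w = u i ⟨w, hw⟩ := by
  have hsymm : (LinearEquiv.ofBijective (coeLinearMap A) h).symm w =
      lof R ι (fun i => A i) i ⟨w, hw⟩ :=
    (LinearEquiv.symm_apply_eq _).2 (coeLinearMap_lof A i ⟨w, hw⟩).symm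
  have hmap : DFinsupp.mapRange.linearEquiv u (lof R ι (fun i => A i) i ⟨w, hw⟩) =
      lof R ι (fun i => A i) i (u i ⟨w, hw⟩) :=
    DFinsupp.mapRange_single (hf := fun i => map_zero (u i))
  simp only [congrComponents, LinearEquiv.trans_apply, hsymm, hmap]
  exact coeLinearMap_lof A i _

theorem map_congrComponents (u : ∀ i, A i ≃ₗ[R] A i) (i : ι) :
    (A i).map (h.congrComponents u : M →ₗ[R] M) = A i := by
  refine le_antisymm ?_ fun w hw => ?_
  · rintro _ ⟨w, hw, rfl⟩
    rw [LinearEquiv.coe_coe, h.congrComponents_apply_of_mem u hw]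
    exact (u i _).2
  · refine ⟨(u i).symm ⟨w, hw⟩, ((u i).symm ⟨w, hw⟩).2, ?_⟩
    rw [LinearEquiv.coe_coe, h.congrComponents_apply_of_mem u ((u i).symm ⟨w, hw⟩).2]
    simp

end DirectSum.IsInternal

theorem Quot.finite_of_rel_iff {α β : Type*} [Finite β] {r : α → α → Prop} (f : α → β)
    (hf : ∀ a b, r a b ↔ f a = f b) : Finite (Quot r) :=
  Finite.of_injective (Quot.lift f fun a b hab => (hf a b).1 hab) <| by
    rintro ⟨a⟩ ⟨b⟩ hab
    exact Quot.sound ((hf a b).2 hab)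

section BaseChange

variable {K V : Type*} [Field K] [AddCommGroup V] [Module K V] {k : ℕ}
  {A : (Fin k → ℤ) → Submodule K V}

theorem baseChangeRel_iff_comp_eq {φ ψ : GradedNilTuple A} :
    BaseChangeRel A φ ψ ↔ ∃ g : V ≃ₗ[K] V, (∀ x, (A x).map (g : V →ₗ[K] V) = A x) ∧
      ∀ i, ψ.1 i ∘ₗ g = g ∘ₗ φ.1 i := by
  simp only [BaseChangeRel, ← LinearMap.comp_assoc, LinearEquiv.eq_comp_toLinearMap_symm]

theorem equivalence_baseChangeRel : Equivalence (BaseChangeRel A) := by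
  refine ⟨fun φ => baseChangeRel_iff_comp_eq.2 ⟨LinearEquiv.refl K V, fun x => Submodule.map_id _,
    fun i => rfl⟩, fun h => ?_, fun h h' => ?_⟩
  · obtain ⟨g, hgA, hg⟩ := baseChangeRel_iff_comp_eq.1 h
    refine baseChangeRel_iff_comp_eq.2 ⟨g.symm, fun x => (Submodule.map_symm_eq_iff g).2 (hgA x),
      fun i => LinearMap.ext fun w => g.injective ?_⟩
    simpa using (LinearMap.congr_fun (hg i) (g.symm w)).symm
  · obtain ⟨g, hgA, hg⟩ := baseChangeRel_iff_comp_eq.1 h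
    obtain ⟨g', hgA', hg'⟩ := baseChangeRel_iff_comp_eq.1 h'
    refine baseChangeRel_iff_comp_eq.2 ⟨g.trans g', fun x => ?_, fun i => ?_⟩
    · rw [LinearEquiv.coe_trans, Submodule.map_comp, hgA, hgA']
    · rw [LinearEquiv.coe_trans, ← LinearMap.comp_assoc, hg', LinearMap.comp_assoc, hg,
        LinearMap.comp_assoc]

theorem BaseChangeRel.exists_map_range_eq {φ ψ : GradedNilTuple A} (h : BaseChangeRel A φ ψ) :
    ∃ g : V ≃ₗ[K] V, ∀ i, (LinearMap.range (φ.1 i)).map (g : V →ₗ[K] V) =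
      LinearMap.range (ψ.1 i) := by
  obtain ⟨g, -, hg⟩ := baseChangeRel_iff_comp_eq.1 h
  exact ⟨g, fun i => (LinearMap.range_eq_map_of_comp_eq g (hg i)).symm⟩

theorem BaseChangeRel.eq_zero_iff {φ ψ : GradedNilTuple A} (h : BaseChangeRel A φ ψ) (i : Fin k) :
    φ.1 i = 0 ↔ ψ.1 i = 0 := by
  obtain ⟨g, hg⟩ := h.exists_map_range_eq
  rw [← LinearMap.range_eq_bot, ← LinearMap.range_eq_bot, ← hg i, Submodule.map_eq_bot_iff]

end BaseChange

def d4Center : Fin 4 → ℤ := ![1, 1, 1, 1]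

def d4Arm : Fin 4 → Fin 4 → ℤ := ![![2, 1, 1, 1], ![1, 2, 1, 1], ![1, 1, 2, 1], ![1, 1, 1, 2]]

def d4Points : Set (Fin 4 → ℤ) := insert d4Center (Set.range d4Arm)

theorem d4Arm_sub_stdE (i : Fin 4) : d4Arm i - stdE 4 i = d4Center := by
  revert i; decide

theorem d4Arm_ne_d4Center (i : Fin 4) : d4Arm i ≠ d4Center := by
  revert i; decide

theorem d4Arm_injective : Function.Injective d4Arm := by
  decide

theorem eq_d4Arm_of_mem_d4Points_of_sub_mem {i : Fin 4} {x : Fin 4 → ℤ} (hx : x ∈ d4Points)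
    (hxi : x - stdE 4 i ∈ d4Points) : x = d4Arm i := by
  simp only [d4Points, Set.mem_insert_iff, Set.mem_range] at hx hxi
  rcases hx with rfl | ⟨j, rfl⟩ <;> decide +revert

theorem eq_d4Arm_of_mem_d4Points_of_le {i : Fin 4} {x : Fin 4 → ℤ} (hx : x ∈ d4Points)
    (hle : ∀ l, d4Arm i l ≤ x l) : x = d4Arm i := by
  simp only [d4Points, Set.mem_insert_iff, Set.mem_range] at hx
  rcases hx with rfl | ⟨j, rfl⟩ <;> decide +revert

section D4

open LinearMap

variable {K V : Type*} [Field K] [AddCommGroup V] [Module K V]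
  {A : (Fin 4 → ℤ) → Submodule K V}

theorem isGradedNilTuple_of_range_le {φ : Fin 4 → Module.End K V}
    (hrange : ∀ i, range (φ i) ≤ A d4Center)
    (hzero : ∀ i x, x ≠ d4Arm i → ∀ w ∈ A x, φ i w = 0) : IsGradedNilTuple A φ := by
  have hmul : ∀ i j, φ i * φ j = 0 := fun i j => LinearMap.ext fun w =>
    hzero i _ (d4Arm_ne_d4Center i).symm _ (hrange j ⟨w, rfl⟩)
  refine ⟨fun i j => by rw [Commute, SemiconjBy, hmul, hmul], fun i => ⟨2, by rw [sq, hmul]⟩,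
    fun i x => ?_⟩
  rintro _ ⟨w, hw, rfl⟩
  by_cases hx : x = d4Arm i
  · subst hx
    rw [d4Arm_sub_stdE]
    exact hrange i ⟨w, rfl⟩
  · rw [hzero i x hx w hw]
    exact zero_mem _

section RankOne

variable (hA : DirectSum.IsInternal A) (ℓ : ∀ i, Module.Dual K (A (d4Arm i))) {c : Fin 4 → V}
  (hc : ∀ i, c i ∈ A d4Center)

noncomputable def d4RankOneTuple : GradedNilTuple A :=
  ⟨fun i => toSpanSingleton K V (c i) ∘ₗ ℓ i ∘ₗ hA.proj (d4Arm i),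
    isGradedNilTuple_of_range_le
      (fun i => (range_comp_le_range _ _).trans <| by
        rw [range_toSpanSingleton, Submodule.span_singleton_le_iff_mem]
        exact hc i)
      (fun i x hx w hw => by simp [hA.proj_apply_of_mem_ne hx hw])⟩

theorem range_d4RankOneTuple_le (i : Fin 4) : range ((d4RankOneTuple hA ℓ hc).1 i) ≤ K ∙ c i :=
  (range_comp_le_range _ _).trans (range_toSpanSingleton _).le

theorem mem_range_d4RankOneTuple {i : Fin 4} {x : A (d4Arm i)} (hx : ℓ i x = 1) :
    c i ∈ range ((d4RankOneTuple hA ℓ hc).1 i) :=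
  ⟨x, by simp [d4RankOneTuple, hA.proj_apply_of_mem, hx]⟩

end RankOne

section Support

variable (hS : ∀ x, A x ≠ ⊥ → x ∈ d4Points)
include hS

theorem IsGradedNilTuple.apply_eq_zero_of_ne_d4Arm {φ : Fin 4 → Module.End K V}
    (hφ : IsGradedNilTuple A φ) {i : Fin 4} {x : Fin 4 → ℤ} (hx : x ≠ d4Arm i) {w : V}
    (hw : w ∈ A x) : φ i w = 0 := by
  have hmem : φ i w ∈ A (x - stdE 4 i) := hφ.2.2 i x ⟨w, hw, rfl⟩
  by_contra hne
  refine hx (eq_d4Arm_of_mem_d4Points_of_sub_mem (hS _ fun h => hne ?_) (hS _ fun h => hne ?_))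
  · rw [h, Submodule.mem_bot] at hw
    rw [hw, map_zero]
  · rwa [h, Submodule.mem_bot] at hmem

theorem IsGradedNilTuple.range_le_d4Center (hA : DirectSum.IsInternal A)
    {φ : Fin 4 → Module.End K V} (hφ : IsGradedNilTuple A φ) (i : Fin 4) :
    range (φ i) ≤ A d4Center := by
  rw [range_eq_map, ← hA.submodule_iSup_eq_top, Submodule.map_iSup, iSup_le_iff]
  intro x
  by_cases hx : x = d4Arm i
  · subst hx
    simpa [d4Arm_sub_stdE] using hφ.2.2 i (d4Arm i)
  · rintro _ ⟨w, hw, rfl⟩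
    rw [hφ.apply_eq_zero_of_ne_d4Arm hS hx hw]
    exact zero_mem _

theorem IsGradedNilTuple.eq_zero_iff_comp_subtype (hA : DirectSum.IsInternal A)
    {φ : Fin 4 → Module.End K V} (hφ : IsGradedNilTuple A φ) (i : Fin 4) :
    φ i = 0 ↔ φ i ∘ₗ (A (d4Arm i)).subtype = 0 := by
  refine ⟨fun h => by rw [h, zero_comp], fun h => hA.linearMap_ext fun x w hw => ?_⟩
  by_cases hx : x = d4Arm i
  · subst hx
    exact LinearMap.congr_fun h ⟨w, hw⟩
  · rw [hφ.apply_eq_zero_of_ne_d4Arm hS hx hw, LinearMap.zero_apply]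

end Support

end D4

section Finite

open LinearMap

variable {K V : Type*} [Field K] [AddCommGroup V] [Module K V] [FiniteDimensional K V]
  {A : (Fin 4 → ℤ) → Submodule K V} (hA : DirectSum.IsInternal A)
  (hS : ∀ x, A x ≠ ⊥ → x ∈ d4Points)
include hA hS

theorem exists_linearEquiv_component_intertwining (hc : finrank K (A d4Center) ≤ 1)
    {φ ψ : GradedNilTuple A} (h : ∀ i, φ.1 i = 0 ↔ ψ.1 i = 0) (x : Fin 4 → ℤ) :
    ∃ e : A x ≃ₗ[K] A x, (x = d4Center → e = LinearEquiv.refl K _) ∧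
      ∀ i (w : A x), ψ.1 i (e w) = φ.1 i w := by
  by_cases hx : ∃ i, x = d4Arm i
  · obtain ⟨i, rfl⟩ := hx
    obtain ⟨e, he⟩ : ∃ e : A (d4Arm i) ≃ₗ[K] A (d4Arm i),
        (ψ.1 i ∘ₗ (A (d4Arm i)).subtype) ∘ₗ e = φ.1 i ∘ₗ (A (d4Arm i)).subtype :=
      exists_linearEquiv_comp_eq_of_range_eq <| range_eq_range_of_finrank_le_one hc
        (range_comp_le_range _ _ |>.trans (φ.2.range_le_d4Center hS hA i))
        (range_comp_le_range _ _ |>.trans (ψ.2.range_le_d4Center hS hA i))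
        (by rw [← φ.2.eq_zero_iff_comp_subtype hS hA, ← ψ.2.eq_zero_iff_comp_subtype hS hA, h])
    refine ⟨e, fun hi => absurd hi (d4Arm_ne_d4Center i), fun j w => ?_⟩
    by_cases hij : i = j
    · subst hij
      exact LinearMap.congr_fun he w
    · have hne : d4Arm i ≠ d4Arm j := d4Arm_injective.ne hij
      rw [ψ.2.apply_eq_zero_of_ne_d4Arm hS hne (e w).2, φ.2.apply_eq_zero_of_ne_d4Arm hS hne w.2]
  · simp only [not_exists] at hx
    refine ⟨LinearEquiv.refl K _, fun _ => rfl, fun j w => ?_⟩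
    rw [ψ.2.apply_eq_zero_of_ne_d4Arm hS (hx j) (LinearEquiv.refl K _ w).2,
      φ.2.apply_eq_zero_of_ne_d4Arm hS (hx j) w.2]

theorem baseChangeRel_of_eq_zero_iff (hc : finrank K (A d4Center) ≤ 1)
    {φ ψ : GradedNilTuple A} (h : ∀ i, φ.1 i = 0 ↔ ψ.1 i = 0) : BaseChangeRel A φ ψ := by
  choose u hu_center hu using exists_linearEquiv_component_intertwining hA hS hc h
  refine baseChangeRel_iff_comp_eq.2 ⟨hA.congrComponents u, hA.map_congrComponents u, fun i => ?_⟩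
  have hfix : (hA.congrComponents u : V →ₗ[K] V) ∘ₗ φ.1 i = φ.1 i := LinearMap.ext fun w => by
    have hw := φ.2.range_le_d4Center hS hA i ⟨w, rfl⟩
    simp [hA.congrComponents_apply_of_mem u hw, hu_center]
  rw [hfix]
  refine hA.linearMap_ext fun x w hw => ?_
  simpa [hA.congrComponents_apply_of_mem u hw] using hu x i ⟨w, hw⟩

theorem finite_quot_baseChangeRel_of_finrank_le_one (hc : finrank K (A d4Center) ≤ 1) :
    Finite (Quot (BaseChangeRel A)) :=
  Quot.finite_of_rel_iff (fun φ : GradedNilTuple A => {i | φ.1 i = 0}) fun _ _ =>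
    ⟨fun h => Set.ext h.eq_zero_iff,
      fun h => baseChangeRel_of_eq_zero_iff hA hS hc fun i => Set.ext_iff.1 h i⟩

end Finite

theorem infinite_quot_baseChangeRel_of_two_le_finrank {K V : Type*} [Field K] [Infinite K]
    [AddCommGroup V] [Module K V] {A : (Fin 4 → ℤ) → Submodule K V} (hA : DirectSum.IsInternal A)
    (harm : ∀ i, A (d4Arm i) ≠ ⊥) (hc : 2 ≤ finrank K (A d4Center)) :
    Infinite (Quot (BaseChangeRel A)) := by
  have : Nontrivial (A d4Center) :=
    Module.nontrivial_of_finrank_pos (by omega : 0 < finrank K (A d4Center))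
  obtain ⟨u, hu⟩ := exists_ne (0 : A d4Center)
  obtain ⟨v, huv⟩ := exists_linearIndependent_pair_of_one_lt_finrank hc hu
  replace huv : LinearIndependent K ![(u : V), v] := by
    have := huv.map' (A d4Center).subtype (Submodule.ker_subtype _)
    rwa [← FinVec.map_eq] at this
  choose x hx using fun i =>
    have := Submodule.nontrivial_iff_ne_bot.2 (harm i)
    exists_ne (0 : A (d4Arm i))
  choose ℓ hℓ using fun i => Module.Projective.exists_dual_eq_one K (hx i)
  let c : K → Fin 4 → V := fun t => ![u, v, u + v, u + t • (v : V)]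
  have hc_mem : ∀ t i, c t i ∈ A d4Center := by
    intro t i
    fin_cases i <;> simp [c, add_mem, Submodule.smul_mem]
  refine Infinite.of_injective (fun t => Quot.mk _ (d4RankOneTuple hA ℓ (hc_mem t)))
    fun t t' htt' => ?_
  obtain ⟨g, hg⟩ :=
    (equivalence_baseChangeRel.eqvGen_iff.1 (Quot.eqvGen_exact htt')).exists_map_range_eq
  have key : ∀ i, g (c t i) ∈ K ∙ c t' i := fun i =>
    range_d4RankOneTuple_le hA ℓ (hc_mem t') i
      (hg i ▸ Submodule.mem_map_of_mem (mem_range_d4RankOneTuple hA ℓ (hc_mem t) (hℓ i)))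
  exact huv.eq_of_apply_mem_span_singleton g.injective (key 0) (key 1) (key 2) (key 3)

theorem d4Points_eq : d4Points =
    {![1, 1, 1, 1], ![2, 1, 1, 1], ![1, 2, 1, 1], ![1, 1, 2, 1], ![1, 1, 1, 2]} := by
  ext x
  simp only [d4Points, d4Arm, d4Center, Matrix.range_cons, Matrix.range_empty, Set.mem_insert_iff,
    Set.mem_union, Set.mem_singleton_iff, Set.union_empty]

namespace GradedVS

variable {K : Type*} [Field K] (W : GradedVS K 4) (hsh : shapeOf W.grading = d4Points)
include hsh

theorem mem_d4Points_of_ne_bot {x : Fin 4 → ℤ} (hx : W.grading x ≠ ⊥) : x ∈ d4Points :=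
  hsh ▸ ⟨fun i => not_lt.1 fun h => hx (W.supp x ⟨i, h⟩), x, fun _ => le_rfl, hx⟩

theorem d4Arm_ne_bot (i : Fin 4) : W.grading (d4Arm i) ≠ ⊥ := by
  obtain ⟨-, p, hp, hne⟩ : d4Arm i ∈ shapeOf W.grading := hsh ▸ Set.mem_insert_of_mem _ ⟨i, rfl⟩
  rwa [← eq_d4Arm_of_mem_d4Points_of_le (W.mem_d4Points_of_ne_bot hsh hne) hp]

end GradedVS

/-- for a 4-graded vector space of shape `D̃₄`, the number of 4-graded
nilpotent tuples up to base change is finite iff the dimension vector does not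
dominate the minimal nullroot `(2;1,1,1,1)`. -/
theorem statement7 (K : Type*) [Field K] [IsAlgClosed K] (W : GradedVS K 4)
    (hsh : shapeOf W.grading =
      ({![1, 1, 1, 1], ![2, 1, 1, 1], ![1, 2, 1, 1], ![1, 1, 2, 1],
        ![1, 1, 1, 2]} : Set (Fin 4 → ℤ))) :
    Finite (Quot (BaseChangeRel W.grading)) ↔
      ¬ (2 ≤ Module.finrank K (W.grading ![1, 1, 1, 1]) ∧
         1 ≤ Module.finrank K (W.grading ![2, 1, 1, 1]) ∧
         1 ≤ Module.finrank K (W.grading ![1, 2, 1, 1]) ∧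
         1 ≤ Module.finrank K (W.grading ![1, 1, 2, 1]) ∧
         1 ≤ Module.finrank K (W.grading ![1, 1, 1, 2])) := by
  rw [← d4Points_eq] at hsh
  have harm i : 1 ≤ finrank K (W.grading (d4Arm i)) :=
    Submodule.one_le_finrank_iff.2 (W.d4Arm_ne_bot hsh i)
  have key : Finite (Quot (BaseChangeRel W.grading)) ↔ finrank K (W.grading d4Center) ≤ 1 :=
    ⟨fun hfin => not_lt.1 fun hc => not_finite_iff_infinite.2
        (infinite_quot_baseChangeRel_of_two_le_finrank W.internal (W.d4Arm_ne_bot hsh) hc) hfin,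
      finite_quot_baseChangeRel_of_finrank_le_one W.internal fun _ => W.mem_d4Points_of_ne_bot hsh⟩
  rw [key]
  exact ⟨fun h ⟨h2, _⟩ => absurd (h2.trans h) (by norm_num),
    fun h => not_lt.1 fun h2 => h ⟨h2, harm 0, harm 1, harm 2, harm 3⟩⟩
end
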